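/- For every θ ∈ Θ with |θ| ≤ ν₀/(2 L_a) and every v₀ ∈ V₀ there exists a unique element 𝒩_θ v₀ ∈ W₀ such that a_θ(𝒩_θ v₀, w̃) = − a_θ(v₀, w̃) for all w̃ ∈ W₀; moreover ‖𝒩_θ v₀‖₀ ≤ 2 L_a ν₀⁻¹ |θ| ‖v₀‖₀ and ‖v₀‖₀ ≤ ‖v₀ + 𝒩_θ v₀‖₀ ≤ 2 ‖v₀‖₀. -/

import Mathlib

noncomputable section

open scoped Classical

/-- An abstract family of non-negative bounded sesquilinear forms `a θ`, `b θ`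
(linear in the first argument, conjugate-linear in the second) on a complex Hilbert
space `H`, parametrised by `θ` in a compact subset `Θ` of `ℝⁿ`, such that
`(·,·)_θ := a θ + b θ` is a family of inner products whose norms are equivalent
to the norm of `H`. -/
structure FormFamily (n : ℕ) (H : Type*) [NormedAddCommGroup H] [InnerProductSpace ℂ H]
    [CompleteSpace H] where
  Θ : Set (EuclideanSpace ℝ (Fin n))
  compactΘ : IsCompact Θ
  a : EuclideanSpace ℝ (Fin n) → H → H → ℂ
  b : EuclideanSpace ℝ (Fin n) → H → H → ℂ
  a_addL : ∀ θ ∈ Θ, ∀ u v w : H, a θ (u + v) w = a θ u w + a θ v w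
  a_smulL : ∀ θ ∈ Θ, ∀ (c : ℂ) (u w : H), a θ (c • u) w = c * a θ u w
  a_addR : ∀ θ ∈ Θ, ∀ u v w : H, a θ u (v + w) = a θ u v + a θ u w
  a_smulR : ∀ θ ∈ Θ, ∀ (c : ℂ) (u w : H), a θ u (c • w) = starRingEnd ℂ c * a θ u w
  a_nonneg : ∀ θ ∈ Θ, ∀ u : H, 0 ≤ (a θ u u).re
  a_im : ∀ θ ∈ Θ, ∀ u : H, (a θ u u).im = 0
  a_bdd : ∀ θ ∈ Θ, ∃ C : ℝ, ∀ u w : H, ‖a θ u w‖ ≤ C * ‖u‖ * ‖w‖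
  b_addL : ∀ θ ∈ Θ, ∀ u v w : H, b θ (u + v) w = b θ u w + b θ v w
  b_smulL : ∀ θ ∈ Θ, ∀ (c : ℂ) (u w : H), b θ (c • u) w = c * b θ u w
  b_addR : ∀ θ ∈ Θ, ∀ u v w : H, b θ u (v + w) = b θ u v + b θ u w
  b_smulR : ∀ θ ∈ Θ, ∀ (c : ℂ) (u w : H), b θ u (c • w) = starRingEnd ℂ c * b θ u w
  b_nonneg : ∀ θ ∈ Θ, ∀ u : H, 0 ≤ (b θ u u).re
  b_im : ∀ θ ∈ Θ, ∀ u : H, (b θ u u).im = 0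
  b_bdd : ∀ θ ∈ Θ, ∃ C : ℝ, ∀ u w : H, ‖b θ u w‖ ≤ C * ‖u‖ * ‖w‖
  equivNorm : ∀ θ ∈ Θ, ∃ c₁ c₂ : ℝ, 0 < c₁ ∧ ∀ u : H,
    c₁ * ‖u‖ ^ 2 ≤ (a θ u u).re + (b θ u u).re ∧
      (a θ u u).re + (b θ u u).re ≤ c₂ * ‖u‖ ^ 2

namespace FormFamily

variable {n : ℕ} {H : Type*} [NormedAddCommGroup H] [InnerProductSpace ℂ H] [CompleteSpace H]

/-- The inner product `(u, w)_θ := a θ u w + b θ u w`. -/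
def ip (S : FormFamily n H) (θ : EuclideanSpace ℝ (Fin n)) (u w : H) : ℂ :=
  S.a θ u w + S.b θ u w

/-- The squared `θ`-norm `‖u‖_θ ^ 2 = (u, u)_θ`. -/
def nsq (S : FormFamily n H) (θ : EuclideanSpace ℝ (Fin n)) (u : H) : ℝ :=
  (S.ip θ u u).re

/-- The `θ`-norm `‖u‖_θ`. -/
def nrm (S : FormFamily n H) (θ : EuclideanSpace ℝ (Fin n)) (u : H) : ℝ :=
  Real.sqrt (S.nsq θ u)

/-- The degeneracy subspace `V_θ = {v : a_θ[v] = 0}`. -/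
def V (S : FormFamily n H) (θ : EuclideanSpace ℝ (Fin n)) : Set H :=
  {v : H | S.a θ v v = 0}

/-- `W_θ`, the orthogonal complement of `V_θ` in `H` with respect to `(·,·)_θ`. -/
def W (S : FormFamily n H) (θ : EuclideanSpace ℝ (Fin n)) : Set H :=
  {w : H | ∀ v ∈ S.V θ, S.ip θ w v = 0}

end FormFamily

/-- `f : H → ℂ` is a bounded conjugate-linear functional. -/
def IsBddConjLinear {H : Type*} [NormedAddCommGroup H] [InnerProductSpace ℂ H]
    (f : H → ℂ) : Prop :=
  (∀ u v : H, f (u + v) = f u + f v) ∧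
    (∀ (c : ℂ) (u : H), f (c • u) = starRingEnd ℂ c * f u) ∧
    ∃ C : ℝ, ∀ u : H, ‖f u‖ ≤ C * ‖u‖

/-- The homogenised form `a^h_θ(v,vt) = a''₀(v,vt)θ·θ - a₀(N_θ v, N_θ vt)`. -/
def ahom {n : ℕ} {H : Type*} [NormedAddCommGroup H] [InnerProductSpace ℂ H] [CompleteSpace H]
    (S : FormFamily n H) (a'' : H → H → Fin n → Fin n → ℂ)
    (N : EuclideanSpace ℝ (Fin n) → H → H) (θ : EuclideanSpace ℝ (Fin n)) (v vt : H) : ℂ :=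
  (∑ j, ∑ k, a'' v vt j k * (θ j : ℂ) * (θ k : ℂ)) - S.a 0 (N θ v) (N θ vt)

/-! For `|θ| ≤ ν₀ / (2 L_a)` the Lipschitz bound moves `a_θ[w]` by at most
`L_a |θ| ‖w‖₀² ≤ ν₀/2 ‖w‖₀²`, so the gap condition keeps `a_θ` coercive on `W₀` and Lax–Milgram
yields the unique `𝒩_θ v₀`. Cauchy–Schwarz for the non-negative form `a₀` gives `a₀(v₀, ·) = 0`,
so testing the equation with `𝒩_θ v₀` itself bounds
`ν₀/2 ‖𝒩_θ v₀‖₀² ≤ |a_θ(v₀, 𝒩_θ v₀) - a₀(v₀, 𝒩_θ v₀)| ≤ L_a |θ| ‖v₀‖₀ ‖𝒩_θ v₀‖₀`.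
The bounds on `v₀ + 𝒩_θ v₀` are Pythagoras, since `𝒩_θ v₀ ∈ W₀` is `(·,·)₀`-orthogonal to `v₀`. -/

structure IsSesqForm {H : Type*} [AddCommGroup H] [Module ℂ H] (φ : H → H → ℂ) : Prop where
  add_left : ∀ u v w : H, φ (u + v) w = φ u w + φ v w
  smul_left : ∀ (c : ℂ) (u w : H), φ (c • u) w = c * φ u w
  add_right : ∀ u v w : H, φ u (v + w) = φ u v + φ u w
  smul_right : ∀ (c : ℂ) (u w : H), φ u (c • w) = starRingEnd ℂ c * φ u w

namespace IsSesqForm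

section Algebraic

variable {H : Type*} [AddCommGroup H] [Module ℂ H] {φ : H → H → ℂ}

theorem zero_left (hφ : IsSesqForm φ) (w : H) : φ 0 w = 0 := by
  simpa using hφ.smul_left 0 0 w

theorem neg_left (hφ : IsSesqForm φ) (u w : H) : φ (-u) w = -φ u w := by
  simpa using hφ.smul_left (-1) u w

theorem sub_left (hφ : IsSesqForm φ) (u v w : H) : φ (u - v) w = φ u w - φ v w := by
  rw [sub_eq_add_neg, hφ.add_left, hφ.neg_left, sub_eq_add_neg]

/-- Polarization with `u + w` and `u + I • w`. -/
theorem conj_symm (hφ : IsSesqForm φ) (him : ∀ u, (φ u u).im = 0) (u w : H) :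
    starRingEnd ℂ (φ u w) = φ w u := by
  have him_sum : (φ u w).im + (φ w u).im = 0 := by
    have h := him (u + w)
    simp only [hφ.add_left, hφ.add_right, Complex.add_im, him u, him w] at h
    linarith
  have hre_diff : (φ w u).re - (φ u w).re = 0 := by
    have h := him (u + Complex.I • w)
    simp only [hφ.add_left, hφ.add_right, hφ.smul_left, hφ.smul_right, Complex.conj_I,
      Complex.add_im, Complex.mul_im, Complex.mul_re, Complex.neg_re, Complex.neg_im, Complex.I_re,
      Complex.I_im, him u, him w] at h
    linarith
  apply Complex.ext
  · simp only [Complex.conj_re]; linarith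
  · simp only [Complex.conj_im]; linarith

/-- The arguments are swapped because Mathlib's inner product is conjugate-linear in the first
argument. -/
abbrev toPreInnerProductSpaceCore (hφ : IsSesqForm φ) (him : ∀ u, (φ u u).im = 0)
    (hnn : ∀ u, 0 ≤ (φ u u).re) : PreInnerProductSpace.Core ℂ H where
  inner u w := φ w u
  conj_inner_symm u w := hφ.conj_symm him u w
  re_inner_nonneg u := hnn u
  add_left u v w := hφ.add_right w u v
  smul_left u w c := hφ.smul_right c w u

theorem eq_zero_of_self_eq_zero (hφ : IsSesqForm φ) (him : ∀ u, (φ u u).im = 0)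
    (hnn : ∀ u, 0 ≤ (φ u u).re) {v : H} (hv : φ v v = 0) (w : H) : φ v w = 0 := by
  have hCS : ‖φ v w‖ * ‖φ w v‖ ≤ (φ w w).re * (φ v v).re :=
    @InnerProductSpace.Core.inner_mul_inner_self_le ℂ H _ _ _
      (hφ.toPreInnerProductSpaceCore him hnn) w v
  rw [← hφ.conj_symm him v w, Complex.norm_conj, hv, Complex.zero_re, mul_zero] at hCS
  exact norm_eq_zero.mp (mul_self_eq_zero.mp (le_antisymm hCS (mul_self_nonneg _)))

def orthogonal (hφ : IsSesqForm φ) (K : Set H) : Submodule ℂ H where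
  carrier := {w | ∀ v ∈ K, φ w v = 0}
  add_mem' hu hw v hv := by rw [hφ.add_left, hu v hv, hw v hv, add_zero]
  zero_mem' v _ := hφ.zero_left v
  smul_mem' c u hu v hv := by rw [hφ.smul_left, hu v hv, mul_zero]

end Algebraic

section Analytic

variable {H : Type*} [NormedAddCommGroup H] [InnerProductSpace ℂ H] {φ : H → H → ℂ}

theorem continuous_left (hφ : IsSesqForm φ) {C : ℝ} (hC : ∀ u w, ‖φ u w‖ ≤ C * ‖u‖ * ‖w‖)
    (v : H) : Continuous (φ · v) :=
  let L : H →ₗ[ℂ] ℂ :=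
    { toFun u := φ u v
      map_add' u w := hφ.add_left u w v
      map_smul' c u := hφ.smul_left c u v }
  (L.mkContinuous (C * ‖v‖) fun u => (hC u v).trans_eq (by ring)).continuous

theorem isClosed_orthogonal (hφ : IsSesqForm φ) {C : ℝ}
    (hC : ∀ u w, ‖φ u w‖ ≤ C * ‖u‖ * ‖w‖) (K : Set H) :
    IsClosed (hφ.orthogonal K : Set H) := by
  have hK : (hφ.orthogonal K : Set H) = ⋂ v ∈ K, {w | φ w v = 0} := by
    ext w
    simp only [Set.mem_iInter]
    rfl
  rw [hK]
  exact isClosed_biInter fun v _ => isClosed_eq (hφ.continuous_left hC v) continuous_const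

theorem isBddConjLinear (hφ : IsSesqForm φ) {C : ℝ} (hC : ∀ u w, ‖φ u w‖ ≤ C * ‖u‖ * ‖w‖)
    (v : H) : IsBddConjLinear (φ v) :=
  ⟨hφ.add_right v, fun c w => hφ.smul_right c v w, C * ‖v‖, hC v⟩

theorem eq_of_coercive (hφ : IsSesqForm φ) {W : Submodule ℂ H} {c : ℝ} (hc : 0 < c)
    (hcoer : ∀ w ∈ W, c * ‖w‖ ^ 2 ≤ (φ w w).re) {N N' : H} (hN : N ∈ W) (hN' : N' ∈ W)
    (h : ∀ w ∈ W, φ N w = φ N' w) : N = N' := by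
  have hd : N - N' ∈ W := W.sub_mem hN hN'
  have hzero : φ (N - N') (N - N') = 0 := by
    rw [hφ.sub_left, h _ hd, sub_self]
  have hsq : c * ‖N - N'‖ ^ 2 ≤ c * 0 := by simpa [hzero] using hcoer _ hd
  have hnorm : ‖N - N'‖ ^ 2 = 0 := le_antisymm (le_of_mul_le_mul_left hsq hc) (sq_nonneg _)
  exact sub_eq_zero.mp (norm_eq_zero.mp (pow_eq_zero_iff two_ne_zero |>.mp hnorm))

/-- Lax–Milgram for a sesquilinear form, obtained from the real Lax–Milgram theorem applied to
`Re φ` on `W` viewed as a real Hilbert space. -/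
theorem exists_eq_of_coercive (hφ : IsSesqForm φ) (W : Submodule ℂ H) [CompleteSpace W]
    {C : ℝ} (hC : ∀ u w, ‖φ u w‖ ≤ C * ‖u‖ * ‖w‖) {c : ℝ} (hc : 0 < c)
    (hcoer : ∀ w ∈ W, c * ‖w‖ ^ 2 ≤ (φ w w).re) {f : H → ℂ} (hf : IsBddConjLinear f) :
    ∃ N ∈ W, ∀ w ∈ W, φ N w = f w := by
  let : InnerProductSpace ℝ W := InnerProductSpace.complexToReal
  obtain ⟨hf_add, hf_smul, Cf, hCf⟩ := hf
  have coe_smul : ∀ (r : ℝ) (u : W), ((r • u : W) : H) = (r : ℂ) • (u : H) := fun _ _ => rfl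
  let B : W →L[ℝ] W →L[ℝ] ℝ :=
    (LinearMap.mk₂ ℝ (fun u w : W => (φ u w).re)
      (fun u v w => by simp only [Submodule.coe_add, hφ.add_left, Complex.add_re])
      (fun r u w => by simp only [coe_smul, hφ.smul_left, Complex.re_ofReal_mul, smul_eq_mul])
      (fun u v w => by simp only [Submodule.coe_add, hφ.add_right, Complex.add_re])
      (fun r u w => by
        simp only [coe_smul, hφ.smul_right, Complex.conj_ofReal, Complex.re_ofReal_mul,
          smul_eq_mul])).mkContinuous₂ C
      fun u w => (Complex.abs_re_le_norm _).trans (hC u w)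
  let F : W →L[ℝ] ℝ :=
    LinearMap.mkContinuous
      { toFun w := (f w).re
        map_add' u w := by simp only [Submodule.coe_add, hf_add, Complex.add_re]
        map_smul' r w := by
          simp only [coe_smul, hf_smul, Complex.conj_ofReal, Complex.re_ofReal_mul,
            smul_eq_mul, RingHom.id_apply] }
      Cf fun w => (Complex.abs_re_le_norm _).trans (hCf w)
  have hB : IsCoercive B := ⟨c, hc, fun u => by
    show c * ‖u‖ * ‖u‖ ≤ (φ u u).re
    simpa [sq, mul_assoc] using hcoer u u.2⟩
  set N := hB.continuousLinearEquivOfBilin.symm ((InnerProductSpace.toDual ℝ W).symm F)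
  have hre : ∀ w : W, (φ N w - f w).re = 0 := fun w => by
    have h := hB.continuousLinearEquivOfBilin_apply N w
    rw [ContinuousLinearEquiv.apply_symm_apply, InnerProductSpace.toDual_symm_apply] at h
    simp only [Complex.sub_re]
    exact sub_eq_zero.mpr h.symm
  refine ⟨N, N.2, fun w hw => sub_eq_zero.mp (Complex.ext (hre ⟨w, hw⟩) ?_)⟩
  -- the real part at `I • w` is the imaginary part at `w`
  have h := hre ⟨Complex.I • w, W.smul_mem _ hw⟩
  simp only [hφ.smul_right, hf_smul, Complex.conj_I, ← mul_sub,
    Complex.mul_re, Complex.neg_re, Complex.neg_im, Complex.I_re, Complex.I_im] at h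
  simpa using h

end Analytic

end IsSesqForm

namespace FormFamily

variable {n : ℕ} {H : Type*} [NormedAddCommGroup H] [InnerProductSpace ℂ H] [CompleteSpace H]
  (S : FormFamily n H) {θ : EuclideanSpace ℝ (Fin n)}

theorem isSesqForm_a (hθ : θ ∈ S.Θ) : IsSesqForm (S.a θ) :=
  ⟨S.a_addL θ hθ, S.a_smulL θ hθ, S.a_addR θ hθ, S.a_smulR θ hθ⟩

theorem isSesqForm_ip (hθ : θ ∈ S.Θ) : IsSesqForm (S.ip θ) where
  add_left u v w := by simp only [ip, S.a_addL θ hθ, S.b_addL θ hθ]; ring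
  smul_left c u w := by simp only [ip, S.a_smulL θ hθ, S.b_smulL θ hθ]; ring
  add_right u v w := by simp only [ip, S.a_addR θ hθ, S.b_addR θ hθ]; ring
  smul_right c u w := by simp only [ip, S.a_smulR θ hθ, S.b_smulR θ hθ]; ring

theorem ip_self_im (hθ : θ ∈ S.Θ) (u : H) : (S.ip θ u u).im = 0 := by
  simp only [ip, Complex.add_im, S.a_im θ hθ, S.b_im θ hθ, add_zero]

theorem nsq_eq (θ : EuclideanSpace ℝ (Fin n)) (u : H) :
    S.nsq θ u = (S.a θ u u).re + (S.b θ u u).re :=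
  Complex.add_re _ _

theorem nsq_nonneg (hθ : θ ∈ S.Θ) (u : H) : 0 ≤ S.nsq θ u := by
  rw [nsq_eq]
  exact add_nonneg (S.a_nonneg θ hθ u) (S.b_nonneg θ hθ u)

theorem nrm_nonneg (θ : EuclideanSpace ℝ (Fin n)) (u : H) : 0 ≤ S.nrm θ u :=
  Real.sqrt_nonneg _

theorem nrm_mul_self (hθ : θ ∈ S.Θ) (u : H) : S.nrm θ u * S.nrm θ u = S.nsq θ u :=
  Real.mul_self_sqrt (S.nsq_nonneg hθ u)

theorem exists_pos_mul_sq_norm_le_nsq (hθ : θ ∈ S.Θ) :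
    ∃ c > 0, ∀ u : H, c * ‖u‖ ^ 2 ≤ S.nsq θ u := by
  obtain ⟨c, _, hc, hcu⟩ := S.equivNorm θ hθ
  exact ⟨c, hc, fun u => (S.nsq_eq θ u).symm ▸ (hcu u).1⟩

theorem exists_bound_ip (hθ : θ ∈ S.Θ) : ∃ C : ℝ, ∀ u w : H, ‖S.ip θ u w‖ ≤ C * ‖u‖ * ‖w‖ := by
  obtain ⟨Ca, hCa⟩ := S.a_bdd θ hθ
  obtain ⟨Cb, hCb⟩ := S.b_bdd θ hθ
  refine ⟨Ca + Cb, fun u w => ?_⟩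
  calc ‖S.ip θ u w‖ ≤ ‖S.a θ u w‖ + ‖S.b θ u w‖ := norm_add_le _ _
    _ ≤ Ca * ‖u‖ * ‖w‖ + Cb * ‖u‖ * ‖w‖ := add_le_add (hCa u w) (hCb u w)
    _ = (Ca + Cb) * ‖u‖ * ‖w‖ := by ring

theorem isClosed_W (hθ : θ ∈ S.Θ) : IsClosed (S.W θ) := by
  obtain ⟨C, hC⟩ := S.exists_bound_ip hθ
  exact (S.isSesqForm_ip hθ).isClosed_orthogonal hC (S.V θ)

theorem a_eq_zero_of_mem_V (hθ : θ ∈ S.Θ) {v : H} (hv : v ∈ S.V θ) (w : H) : S.a θ v w = 0 :=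
  (S.isSesqForm_a hθ).eq_zero_of_self_eq_zero (S.a_im θ hθ) (S.a_nonneg θ hθ) hv w

theorem nsq_add_of_mem_V_of_mem_W (hθ : θ ∈ S.Θ) {v w : H} (hv : v ∈ S.V θ) (hw : w ∈ S.W θ) :
    S.nsq θ (v + w) = S.nsq θ v + S.nsq θ w := by
  have hip := S.isSesqForm_ip hθ
  have hwv : S.ip θ w v = 0 := hw v hv
  have hvw : S.ip θ v w = 0 := by
    rw [← hip.conj_symm (S.ip_self_im hθ) w v, hwv, map_zero]
  simp only [nsq, hip.add_left, hip.add_right, hwv, hvw, add_zero, zero_add, Complex.add_re]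

theorem nrm_le_nrm_add_of_mem_V_of_mem_W (hθ : θ ∈ S.Θ) {v w : H} (hv : v ∈ S.V θ)
    (hw : w ∈ S.W θ) : S.nrm θ v ≤ S.nrm θ (v + w) := by
  apply Real.sqrt_le_sqrt
  rw [S.nsq_add_of_mem_V_of_mem_W hθ hv hw]
  linarith [S.nsq_nonneg hθ w]

theorem nrm_add_le_two_mul_of_mem_V_of_mem_W (hθ : θ ∈ S.Θ) {v w : H} (hv : v ∈ S.V θ)
    (hw : w ∈ S.W θ) (hwv : S.nrm θ w ≤ S.nrm θ v) : S.nrm θ (v + w) ≤ 2 * S.nrm θ v := by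
  have hsq : S.nsq θ (v + w) ≤ 2 * S.nrm θ v * (2 * S.nrm θ v) := by
    rw [S.nsq_add_of_mem_V_of_mem_W hθ hv hw, ← S.nrm_mul_self hθ v, ← S.nrm_mul_self hθ w]
    nlinarith [S.nrm_nonneg θ w]
  calc S.nrm θ (v + w) ≤ Real.sqrt (2 * S.nrm θ v * (2 * S.nrm θ v)) := Real.sqrt_le_sqrt hsq
    _ = 2 * S.nrm θ v := Real.sqrt_mul_self (by linarith [S.nrm_nonneg θ v])

variable {La : ℝ}

theorem half_mul_nsq_le_re_a
    (hLa : ∀ θ₁ ∈ S.Θ, ∀ θ₂ ∈ S.Θ, ∀ u w : H,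
      ‖S.a θ₁ u w - S.a θ₂ u w‖ ≤ La * ‖θ₁ - θ₂‖ * S.nrm θ₁ u * S.nrm θ₁ w)
    (h0 : (0 : EuclideanSpace ℝ (Fin n)) ∈ S.Θ) {ν₀ : ℝ}
    (hgap0 : ∀ w ∈ S.W 0, ν₀ * S.nsq 0 w ≤ (S.a 0 w w).re)
    (hθ : θ ∈ S.Θ) (hsmall : La * ‖θ‖ ≤ ν₀ / 2) :
    ∀ w ∈ S.W 0, ν₀ / 2 * S.nsq 0 w ≤ (S.a θ w w).re := by
  intro w hw
  have hdiff : (S.a 0 w w).re - (S.a θ w w).re ≤ La * ‖θ‖ * S.nsq 0 w :=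
    calc (S.a 0 w w).re - (S.a θ w w).re = (S.a 0 w w - S.a θ w w).re := (Complex.sub_re _ _).symm
      _ ≤ ‖S.a 0 w w - S.a θ w w‖ := Complex.re_le_norm _
      _ ≤ La * ‖0 - θ‖ * S.nrm 0 w * S.nrm 0 w := hLa 0 h0 θ hθ w w
      _ = La * ‖θ‖ * S.nsq 0 w := by rw [zero_sub, norm_neg, mul_assoc, S.nrm_mul_self h0]
  have hsmall' : La * ‖θ‖ * S.nsq 0 w ≤ ν₀ / 2 * S.nsq 0 w :=
    mul_le_mul_of_nonneg_right hsmall (S.nsq_nonneg h0 w)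
  linarith [hgap0 w hw]

theorem exists_pos_mul_sq_norm_le_re_a
    (hLa : ∀ θ₁ ∈ S.Θ, ∀ θ₂ ∈ S.Θ, ∀ u w : H,
      ‖S.a θ₁ u w - S.a θ₂ u w‖ ≤ La * ‖θ₁ - θ₂‖ * S.nrm θ₁ u * S.nrm θ₁ w)
    (h0 : (0 : EuclideanSpace ℝ (Fin n)) ∈ S.Θ) {ν₀ : ℝ} (hν₀ : 0 < ν₀)
    (hgap0 : ∀ w ∈ S.W 0, ν₀ * S.nsq 0 w ≤ (S.a 0 w w).re)
    (hθ : θ ∈ S.Θ) (hsmall : La * ‖θ‖ ≤ ν₀ / 2) :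
    ∃ c > 0, ∀ w ∈ S.W 0, c * ‖w‖ ^ 2 ≤ (S.a θ w w).re := by
  obtain ⟨c, hc, hc_le⟩ := S.exists_pos_mul_sq_norm_le_nsq h0
  refine ⟨ν₀ / 2 * c, by positivity, fun w hw => ?_⟩
  calc ν₀ / 2 * c * ‖w‖ ^ 2 ≤ ν₀ / 2 * S.nsq 0 w := by
        rw [mul_assoc]; gcongr; exact hc_le w
    _ ≤ (S.a θ w w).re := S.half_mul_nsq_le_re_a hLa h0 hgap0 hθ hsmall w hw

theorem norm_a_le_of_mem_V_zero
    (hLa : ∀ θ₁ ∈ S.Θ, ∀ θ₂ ∈ S.Θ, ∀ u w : H,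
      ‖S.a θ₁ u w - S.a θ₂ u w‖ ≤ La * ‖θ₁ - θ₂‖ * S.nrm θ₁ u * S.nrm θ₁ w)
    (h0 : (0 : EuclideanSpace ℝ (Fin n)) ∈ S.Θ) (hθ : θ ∈ S.Θ) {v : H} (hv : v ∈ S.V 0)
    (w : H) : ‖S.a θ v w‖ ≤ La * ‖θ‖ * S.nrm 0 v * S.nrm 0 w := by
  simpa [S.a_eq_zero_of_mem_V h0 hv] using hLa 0 h0 θ hθ v w

theorem nrm_le_of_a_self_eq_neg (hLa0 : 0 ≤ La)
    (hLa : ∀ θ₁ ∈ S.Θ, ∀ θ₂ ∈ S.Θ, ∀ u w : H,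
      ‖S.a θ₁ u w - S.a θ₂ u w‖ ≤ La * ‖θ₁ - θ₂‖ * S.nrm θ₁ u * S.nrm θ₁ w)
    (h0 : (0 : EuclideanSpace ℝ (Fin n)) ∈ S.Θ) (hθ : θ ∈ S.Θ) {ν₀ : ℝ} (hν₀ : 0 < ν₀)
    {v N : H} (hv : v ∈ S.V 0) (hcoer : ν₀ / 2 * S.nsq 0 N ≤ (S.a θ N N).re)
    (hN : S.a θ N N = -S.a θ v N) :
    S.nrm 0 N ≤ 2 * La * ν₀⁻¹ * ‖θ‖ * S.nrm 0 v := by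
  have hquad : ν₀ / 2 * S.nrm 0 N * S.nrm 0 N ≤ La * ‖θ‖ * S.nrm 0 v * S.nrm 0 N :=
    calc ν₀ / 2 * S.nrm 0 N * S.nrm 0 N = ν₀ / 2 * S.nsq 0 N := by
          rw [mul_assoc, S.nrm_mul_self h0]
      _ ≤ (S.a θ N N).re := hcoer
      _ ≤ ‖S.a θ v N‖ := by rw [hN, ← norm_neg]; exact Complex.re_le_norm _
      _ ≤ La * ‖θ‖ * S.nrm 0 v * S.nrm 0 N := S.norm_a_le_of_mem_V_zero hLa h0 hθ hv N
  have hlin : ν₀ / 2 * S.nrm 0 N ≤ La * ‖θ‖ * S.nrm 0 v := by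
    rcases (S.nrm_nonneg 0 N).eq_or_lt with hzero | hpos
    · rw [← hzero, mul_zero]
      have := S.nrm_nonneg 0 v
      positivity
    · exact le_of_mul_le_mul_right hquad hpos
  calc S.nrm 0 N = 2 * ν₀⁻¹ * (ν₀ / 2 * S.nrm 0 N) := by field_simp
    _ ≤ 2 * ν₀⁻¹ * (La * ‖θ‖ * S.nrm 0 v) := by gcongr
    _ = 2 * La * ν₀⁻¹ * ‖θ‖ * S.nrm 0 v := by ring

end FormFamily

theorem statement3_general
    {n : ℕ} {H : Type*} [NormedAddCommGroup H] [InnerProductSpace ℂ H]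
    [CompleteSpace H] (S : FormFamily n H)
    (La : ℝ) (hLa0 : 0 < La)
    (hLa : ∀ θ₁ ∈ S.Θ, ∀ θ₂ ∈ S.Θ, ∀ u w : H,
      ‖S.a θ₁ u w - S.a θ₂ u w‖ ≤ La * ‖θ₁ - θ₂‖ * S.nrm θ₁ u * S.nrm θ₁ w)
    (h0 : (0 : EuclideanSpace ℝ (Fin n)) ∈ S.Θ)
    (ν₀ : ℝ) (hν₀ : 0 < ν₀)
    (hgap0 : ∀ w ∈ S.W 0, ν₀ * S.nsq 0 w ≤ (S.a 0 w w).re)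
 :
    ∀ θ ∈ S.Θ, ‖θ‖ ≤ ν₀ / (2 * La) → ∀ v₀ ∈ S.V 0,
      ∃ N ∈ S.W 0,
        (∀ w ∈ S.W 0, S.a θ N w = - S.a θ v₀ w) ∧
          (∀ N' ∈ S.W 0, (∀ w ∈ S.W 0, S.a θ N' w = - S.a θ v₀ w) → N' = N) ∧
            S.nrm 0 N ≤ 2 * La * ν₀⁻¹ * ‖θ‖ * S.nrm 0 v₀ ∧
              S.nrm 0 v₀ ≤ S.nrm 0 (v₀ + N) ∧ S.nrm 0 (v₀ + N) ≤ 2 * S.nrm 0 v₀ := by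
  intro θ hθ hθsmall v₀ hv₀
  have hsmall : La * ‖θ‖ ≤ ν₀ / 2 := by
    rw [le_div_iff₀ (by positivity)] at hθsmall
    linarith
  have hcoef : 2 * La * ν₀⁻¹ * ‖θ‖ ≤ 1 := by
    rw [mul_assoc, mul_comm, mul_assoc, ← div_eq_inv_mul, div_le_one hν₀]
    linarith
  obtain ⟨c, hc, hcoer⟩ := S.exists_pos_mul_sq_norm_le_re_a hLa h0 hν₀ hgap0 hθ hsmall
  have hφ := S.isSesqForm_a hθ
  obtain ⟨Ca, hCa⟩ := S.a_bdd θ hθ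
  let W₀ := (S.isSesqForm_ip h0).orthogonal (S.V 0)
  have : CompleteSpace W₀ := (S.isClosed_W h0).completeSpace_coe
  obtain ⟨N, hNW, hN⟩ :=
    hφ.exists_eq_of_coercive W₀ hCa hc hcoer (hφ.isBddConjLinear hCa (-v₀))
  simp only [hφ.neg_left] at hN
  have hbound := S.nrm_le_of_a_self_eq_neg hLa0.le hLa h0 hθ hν₀ hv₀
    (S.half_mul_nsq_le_re_a hLa h0 hgap0 hθ hsmall N hNW) (hN N hNW)
  refine ⟨N, hNW, hN, fun N' hN' hsol => hφ.eq_of_coercive hc hcoer hN' hNW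
    fun w hw => (hsol w hw).trans (hN w hw).symm, hbound,
    S.nrm_le_nrm_add_of_mem_V_of_mem_W h0 hv₀ hNW,
    S.nrm_add_le_two_mul_of_mem_V_of_mem_W h0 hv₀ hNW ?_⟩
  exact hbound.trans (mul_le_of_le_one_left (S.nrm_nonneg 0 v₀) hcoef)

theorem statement3
    {n : ℕ} (hn : 0 < n) {H : Type*} [NormedAddCommGroup H] [InnerProductSpace ℂ H]
    [CompleteSpace H] (S : FormFamily n H)
    (K : ℝ) (hK0 : 0 < K)
    (hK : ∀ θ₁ ∈ S.Θ, ∀ θ₂ ∈ S.Θ, ∀ u : H, S.nrm θ₁ u ≤ K * S.nrm θ₂ u)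
    (La : ℝ) (hLa0 : 0 < La)
    (hLa : ∀ θ₁ ∈ S.Θ, ∀ θ₂ ∈ S.Θ, ∀ u w : H,
      ‖S.a θ₁ u w - S.a θ₂ u w‖ ≤ La * ‖θ₁ - θ₂‖ * S.nrm θ₁ u * S.nrm θ₁ w)
    (h0 : (0 : EuclideanSpace ℝ (Fin n)) ∈ S.Θ)
    (ν₀ : ℝ) (hν₀ : 0 < ν₀)
    (hgap0 : ∀ w ∈ S.W 0, ν₀ * S.nsq 0 w ≤ (S.a 0 w w).re)
 :
    ∀ θ ∈ S.Θ, ‖θ‖ ≤ ν₀ / (2 * La) → ∀ v₀ ∈ S.V 0,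
      ∃ N ∈ S.W 0,
        (∀ w ∈ S.W 0, S.a θ N w = - S.a θ v₀ w) ∧
          (∀ N' ∈ S.W 0, (∀ w ∈ S.W 0, S.a θ N' w = - S.a θ v₀ w) → N' = N) ∧
            S.nrm 0 N ≤ 2 * La * ν₀⁻¹ * ‖θ‖ * S.nrm 0 v₀ ∧
              S.nrm 0 v₀ ≤ S.nrm 0 (v₀ + N) ∧ S.nrm 0 (v₀ + N) ≤ 2 * S.nrm 0 v₀ :=
  statement3_general S La hLa0 hLa h0 ν₀ hν₀ hgap0
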